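/- arXiv:math/0605503 — 2 statements merged into one kernel-verified Lean document; each statement's English description precedes it below -/
import Mathlib

section
/- Let F be a family of proper arcs. If an arc u is clockwise adjacent to an arc v, then every arc w of F whose right endpoint is encountered after the right endpoint of v and before the right endpoint of u when traversing clockwise from r(v) is also clockwise adjacent to v. -/
open SimpleGraph
open scoped Classical

instance : Fact ((0:ℝ) < 1) := ⟨one_pos⟩

/-- An arc on the unit circle `AddCircle 1`, described by its left endpoint (the first
endpoint met anticlockwise from an interior point) and its (clockwise) length.
Since `0 < len < 1`, an arc is neither a single point nor the whole circle. -/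
structure CArc where
  left : AddCircle (1:ℝ)
  len : ℝ
  len_pos : 0 < len
  len_lt_one : len < 1

namespace CArc

/-- The set of points of the arc: going clockwise from the left endpoint for `len`. -/
def pts (a : CArc) : Set (AddCircle (1:ℝ)) :=
  {q | ∃ t : ℝ, 0 ≤ t ∧ t ≤ a.len ∧ q = a.left + (t : AddCircle (1:ℝ))}

/-- The right endpoint of an arc. -/
noncomputable def right (a : CArc) : AddCircle (1:ℝ) := a.left + ((a.len : ℝ) : AddCircle (1:ℝ))

end CArc

/-- A family of arcs on the circle: a finite set of arcs with all endpoints distinct. -/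
structure ArcFamily where
  arcs : Finset CArc
  endpoints_distinct :
    ∀ a ∈ arcs, ∀ b ∈ arcs, a ≠ b →
      a.left ≠ b.left ∧ a.left ≠ b.right ∧ a.right ≠ b.left ∧ a.right ≠ b.right

namespace ArcFamily

/-- A family of arcs is proper if no arc is properly contained in another. -/
def IsProper (F : ArcFamily) : Prop :=
  ∀ a ∈ F.arcs, ∀ b ∈ F.arcs, ¬ a.pts ⊂ b.pts

/-- The overlap set of a point `p`: all arcs of the family containing `p`. -/
noncomputable def overlap (F : ArcFamily) (p : AddCircle (1:ℝ)) : Finset CArc :=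
  F.arcs.filter fun a => p ∈ a.pts

/-- `r_sup`: the maximum cardinality of an overlap set. -/
noncomputable def rsup (F : ArcFamily) : ℕ :=
  sSup {n | ∃ p, (F.overlap p).card = n}

/-- `r_inf`: the minimum cardinality of an overlap set. -/
noncomputable def rinf (F : ArcFamily) : ℕ :=
  sInf {n | ∃ p, (F.overlap p).card = n}

/-- The circular arc graph of a family: vertices are the arcs, two distinct arcs are
adjacent iff they intersect. -/
def graph (F : ArcFamily) : SimpleGraph {a : CArc // a ∈ F.arcs} where
  Adj u v := u ≠ v ∧ (u.1.pts ∩ v.1.pts).Nonempty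
  symm := ⟨by rintro u v ⟨h, q, h1, h2⟩; exact ⟨h.symm, q, h2, h1⟩⟩
  loopless := ⟨by rintro u ⟨h, -⟩; exact h rfl⟩

/-- `F.CwAdj u v` : the arc `v` is clockwise adjacent to the arc `u`,
i.e. `v ≠ u` and `v ∈ O(r(u))`. -/
def CwAdj (F : ArcFamily) (u v : CArc) : Prop :=
  v ≠ u ∧ v ∈ F.overlap u.right

/-- `F.AcwAdj u v` : the arc `v` is anticlockwise adjacent to the arc `u`,
i.e. `v ≠ u` and `v ∈ O(l(u))`. -/
def AcwAdj (F : ArcFamily) (u v : CArc) : Prop :=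
  v ≠ u ∧ v ∈ F.overlap u.left

end ArcFamily

/-- `G` has a complete minor on `m` vertices: there are `m` pairwise disjoint connected
branch sets with an edge of `G` between any two of them. -/
def HasKMinor {V : Type*} (G : SimpleGraph V) (m : ℕ) : Prop :=
  ∃ B : Fin m → Set V,
    (∀ i, (G.induce (B i)).Connected) ∧
    (Pairwise fun i j => Disjoint (B i) (B j)) ∧
    (Pairwise fun i j => ∃ u ∈ B i, ∃ v ∈ B j, G.Adj u v)

/-- A graph is a proper circular arc graph if it is isomorphic to the circular arc graph
of some proper family of arcs. -/
def IsProperCircularArcGraph {V : Type*} (G : SimpleGraph V) : Prop :=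
  ∃ F : ArcFamily, F.IsProper ∧ Nonempty (G ≃g F.graph)

/-- The clockwise angular distance from `p` to `q`: the unique `t ∈ [0,1)`
with `q = p + t`.  Points are "encountered" in clockwise order of this quantity
when traversing clockwise from `p`. -/
noncomputable def angFrom (p q : AddCircle (1:ℝ)) : ℝ :=
  ((AddCircle.equivIco (1:ℝ) 0) (q - p) : ℝ)

/-! A point `p` lies on an arc `a` exactly when the clockwise distance from `p` to `r(a)` is at
most the length of `a`. Since `u` contains `r(v)`, the clockwise distance from `r(v)` to `r(u)` is
at most `len u`. If `w` did not contain `r(v)`, it would sit strictly inside the stretch from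
`r(v)` to `r(u)`, hence be properly contained in `u`, contradicting properness. -/

lemma angFrom_nonneg (p q : AddCircle (1:ℝ)) : 0 ≤ angFrom p q :=
  ((AddCircle.equivIco (1:ℝ) 0) (q - p)).2.1

lemma angFrom_lt_one (p q : AddCircle (1:ℝ)) : angFrom p q < 1 := by
  simpa [angFrom] using ((AddCircle.equivIco (1:ℝ) 0) (q - p)).2.2

lemma add_angFrom (p q : AddCircle (1:ℝ)) : p + (angFrom p q : AddCircle (1:ℝ)) = q := by
  have h : ((angFrom p q : ℝ) : AddCircle (1:ℝ)) = q - p :=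
    (AddCircle.equivIco (1:ℝ) 0).symm_apply_apply (q - p)
  rw [h, add_sub_cancel]

lemma angFrom_add_coe (p : AddCircle (1:ℝ)) {t : ℝ} (h0 : 0 ≤ t) (h1 : t < 1) :
    angFrom p (p + t) = t := by
  rw [angFrom, add_sub_cancel_left, AddCircle.coe_equivIco_mk_apply]
  simp [Int.fract_eq_self.mpr ⟨h0, h1⟩]

lemma add_coe_angFrom_sub_angFrom (p q r : AddCircle (1:ℝ)) :
    q + ↑(angFrom p r - angFrom p q) = r := by
  have hq := add_angFrom p q
  have hr := add_angFrom p r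
  rw [AddCircle.coe_sub]
  generalize (angFrom p q : AddCircle (1:ℝ)) = s at hq ⊢
  generalize (angFrom p r : AddCircle (1:ℝ)) = t at hr ⊢
  subst hq hr
  abel

lemma angFrom_self (p : AddCircle (1:ℝ)) : angFrom p p = 0 := by
  simpa using angFrom_add_coe p le_rfl one_pos

namespace CArc

lemma mem_pts_iff_angFrom_right_le (a : CArc) (q : AddCircle (1:ℝ)) :
    q ∈ a.pts ↔ angFrom q a.right ≤ a.len := by
  constructor
  · rintro ⟨t, ht0, hta, rfl⟩
    have hright : a.right = a.left + t + ↑(a.len - t) := by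
      rw [CArc.right, AddCircle.coe_sub]; abel
    rw [hright, angFrom_add_coe _ (by linarith) (by linarith [a.len_lt_one])]
    linarith
  · intro hs
    refine ⟨a.len - angFrom q a.right, by linarith, by linarith [angFrom_nonneg q a.right], ?_⟩
    rw [AddCircle.coe_sub, ← add_sub_assoc]
    exact eq_sub_of_add_eq (add_angFrom q a.right)

/-- An arc ending `d ≥ 0` before the right end of `u` and starting strictly after the left end
of `u` is properly contained in `u`. -/
lemma pts_ssubset_of_right_eq_add {u w : CArc} {d : ℝ} (h : u.right = w.right + d)
    (hd : 0 ≤ d) (hlen : d + w.len < u.len) : w.pts ⊂ u.pts := by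
  refine Set.ssubset_iff_subset_ne.mpr ⟨fun q hq => ?_, fun heq => ?_⟩
  · rw [mem_pts_iff_angFrom_right_le] at hq ⊢
    have hs := angFrom_nonneg q w.right
    rw [h, ← add_angFrom q w.right, add_assoc, ← AddCircle.coe_add,
      angFrom_add_coe _ (by linarith) (by linarith [u.len_lt_one])]
    linarith
  · have hleft : u.left ∈ u.pts := by
      rw [mem_pts_iff_angFrom_right_le, CArc.right,
        angFrom_add_coe _ u.len_pos.le u.len_lt_one]
    rw [← heq, mem_pts_iff_angFrom_right_le] at hleft
    have hwright : w.right = u.left + ↑(u.len - d) := by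
      rw [AddCircle.coe_sub, ← add_sub_assoc, ← CArc.right, h, add_sub_cancel_right]
    rw [hwright, angFrom_add_coe _ (by linarith [w.len_pos]) (by linarith [u.len_lt_one])]
      at hleft
    linarith

end CArc

theorem cw_adjacent_between_general (F : ArcFamily) (hF : F.IsProper)
    (u v w : CArc) (hu : u ∈ F.arcs) (hw : w ∈ F.arcs)
    (huv : F.CwAdj v u)
    (h1 : 0 < angFrom v.right w.right)
    (h2 : angFrom v.right w.right < angFrom v.right u.right) :
    F.CwAdj v w := by
  have hu_len : angFrom v.right u.right ≤ u.len :=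
    (u.mem_pts_iff_angFrom_right_le _).mp (Finset.mem_filter.mp huv.2).2
  refine ⟨fun hwv => by simp [hwv, angFrom_self] at h1, Finset.mem_filter.mpr ⟨hw, ?_⟩⟩
  rw [w.mem_pts_iff_angFrom_right_le]
  by_contra! hw_len
  exact hF w hw u hu (CArc.pts_ssubset_of_right_eq_add
    (add_coe_angFrom_sub_angFrom v.right w.right u.right).symm (by linarith) (by linarith))

/-- In a family of proper arcs, if an arc `u` is clockwise adjacent to an
arc `v`, then every arc `w` of `F` whose right endpoint is encountered after `r(v)` and
before `r(u)` when traversing clockwise from `r(v)` is also clockwise adjacent to `v`. -/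
theorem cw_adjacent_between (F : ArcFamily) (hF : F.IsProper)
    (u v w : CArc) (hu : u ∈ F.arcs) (hv : v ∈ F.arcs) (hw : w ∈ F.arcs)
    (huv : F.CwAdj v u)
    (h1 : 0 < angFrom v.right w.right)
    (h2 : angFrom v.right w.right < angFrom v.right u.right) :
    F.CwAdj v w :=
  cw_adjacent_between_general F hF u v w hu hw huv h1 h2
end

section
/- With the labeling q_1,…,q_r, a_1,…,a_k of the arcs of the fixed proper circular arc representation of the minimum counterexample 𝒢: for all i and j with 1 ≤ j ≤ x and 1 ≤ i ≤ k − x, the arc a_{i+j} is clockwise adjacent to the arc a_i. -/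
open SimpleGraph
open scoped Classical

/-- A minimum counterexample to Hadwiger's conjecture among proper circular arc graphs:
a proper family of arcs whose circular arc graph `𝒢` has no complete minor on `χ(𝒢)`
vertices, while every proper circular arc graph on fewer vertices than `𝒢` has a
complete minor on its own chromatic number of vertices. -/
structure MinCounterexample where
  F : ArcFamily
  proper : F.IsProper
  no_clique_minor : ∀ m : ℕ, F.graph.chromaticNumber = m → ¬ HasKMinor F.graph m
  minimal : ∀ (V : Type) [inst : Fintype V] (G : SimpleGraph V),
    IsProperCircularArcGraph G → Fintype.card V < F.arcs.card →
    ∀ m : ℕ, G.chromaticNumber = m → HasKMinor G m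

/-- A minimum counterexample `𝒢` to Hadwiger's conjecture among proper circular arc
graphs, together with a fixed maximum overlap set `O = O(p₀)` of cardinality `r`,
the quantities `x = χ(𝒢) − r` and `k = n − r`, and the labeling `q 1, …, q r`
(the arcs of `O`) and `a 1, …, a k` (the remaining arcs) of the arcs of the
representation in the clockwise order, starting from `p₀`, in which their right
endpoints are encountered. -/
structure LabeledMinCounterexample extends MinCounterexample where
  p₀ : AddCircle (1:ℝ)
  r : ℕ
  x : ℕ
  k : ℕ
  q : ℕ → CArc
  a : ℕ → CArc
  hr : (F.overlap p₀).card = r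
  hmax : r = F.rsup
  hx : F.graph.chromaticNumber = ((r + x : ℕ) : ℕ∞)
  hk : F.arcs.card = r + k
  q_mem : ∀ i, 1 ≤ i → i ≤ r → q i ∈ F.overlap p₀
  a_mem : ∀ j, 1 ≤ j → j ≤ k → a j ∈ F.arcs ∧ a j ∉ F.overlap p₀
  q_inj : ∀ i i', 1 ≤ i → i ≤ r → 1 ≤ i' → i' ≤ r → q i = q i' → i = i'
  a_inj : ∀ j j', 1 ≤ j → j ≤ k → 1 ≤ j' → j' ≤ k → a j = a j' → j = j'
  q_order : ∀ i i', 1 ≤ i → i < i' → i' ≤ r →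
    angFrom p₀ (q i).right < angFrom p₀ (q i').right
  a_order : ∀ j j', 1 ≤ j → j < j' → j' ≤ k →
    angFrom p₀ (a j).right < angFrom p₀ (a j').right
  qa_order : ∀ i j, 1 ≤ i → i ≤ r → 1 ≤ j → j ≤ k →
    angFrom p₀ (q i).right < angFrom p₀ (a j).right

/-! Deleting an arc `u` from the minimum counterexample leaves a smaller proper circular arc graph,
which has a complete minor on its chromatic number of vertices; that minor also lives in `𝒢`, so
`𝒢 - u` is `(r + x - 1)`-colourable. As this colouring cannot extend to `𝒢`, the arc `u` has at
least `r + x - 1` neighbours. In a proper family every neighbour of `u` contains an endpoint of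
`u`, and `|O(l(u))| ≤ r`, whence `|O(r(u))| ≥ x + 1`.

So at least `x` arcs besides `a i` contain `r(a i)`, and one of them, `v`, is none of
`a (i+1), …, a (i+j-1)`. Clockwise from `r(a i)`, the arc `a (i+j)` ends before `v` does; if it
missed `r(a i)` it would therefore lie inside `v`, contradicting properness. -/

lemma angFrom_eq_of_coe_eq {p q : AddCircle (1:ℝ)} {t : ℝ} (h : (t : AddCircle (1:ℝ)) = q - p)
    (ht : t ∈ Set.Ico (0:ℝ) 1) : angFrom p q = t := by
  rw [angFrom, ← h, AddCircle.equivIco_coe_eq (by simpa using ht)]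

lemma coe_angFrom (p q : AddCircle (1:ℝ)) : ((angFrom p q : ℝ) : AddCircle (1:ℝ)) = q - p :=
  (AddCircle.equivIco (1:ℝ) 0).symm_apply_apply (q - p)

lemma angFrom_mem_Ico (p q : AddCircle (1:ℝ)) : angFrom p q ∈ Set.Ico (0:ℝ) 1 := by
  have h := ((AddCircle.equivIco (1:ℝ) 0) (q - p)).2
  exact ⟨h.1, by simpa [angFrom] using h.2⟩

lemma angFrom_eq_sub_of_le {p₀ z q : AddCircle (1:ℝ)} (h : angFrom p₀ z ≤ angFrom p₀ q) :
    angFrom z q = angFrom p₀ q - angFrom p₀ z := by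
  refine angFrom_eq_of_coe_eq ?_ ⟨by linarith, ?_⟩
  · rw [AddCircle.coe_sub, coe_angFrom, coe_angFrom]; abel
  · linarith [(angFrom_mem_Ico p₀ q).2, (angFrom_mem_Ico p₀ z).1]

lemma angFrom_eq_sub_add_one_of_lt {p₀ z q : AddCircle (1:ℝ)} (h : angFrom p₀ q < angFrom p₀ z) :
    angFrom z q = angFrom p₀ q - angFrom p₀ z + 1 := by
  refine angFrom_eq_of_coe_eq ?_ ⟨?_, by linarith⟩
  · rw [AddCircle.coe_add, AddCircle.coe_sub, coe_angFrom, coe_angFrom, AddCircle.coe_period]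
    abel
  · linarith [(angFrom_mem_Ico p₀ q).1, (angFrom_mem_Ico p₀ z).2]

/-- Seen from `p₀`, if `v` does not lie strictly between `z` and `w`, then from `z` one reaches
`w` no later than `v`. -/
lemma angFrom_le_angFrom_of_cyclic {p₀ z w v : AddCircle (1:ℝ)}
    (hzw : angFrom p₀ z ≤ angFrom p₀ w)
    (hv : angFrom p₀ v < angFrom p₀ z ∨ angFrom p₀ w ≤ angFrom p₀ v) :
    angFrom z w ≤ angFrom z v := by
  rw [angFrom_eq_sub_of_le hzw]
  rcases hv with hv | hv
  · rw [angFrom_eq_sub_add_one_of_lt hv]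
    linarith [(angFrom_mem_Ico p₀ w).2, (angFrom_mem_Ico p₀ v).1]
  · rw [angFrom_eq_sub_of_le (hzw.trans hv)]
    linarith

namespace CArc

lemma left_mem (a : CArc) : a.left ∈ a.pts :=
  ⟨0, le_rfl, a.len_pos.le, by simp⟩

lemma right_mem (a : CArc) : a.right ∈ a.pts :=
  ⟨a.len, a.len_pos.le, le_rfl, rfl⟩

lemma left_eq_right_sub (a : CArc) : a.left = a.right - (a.len : AddCircle (1:ℝ)) := by
  rw [right]; abel

/-- Since `p ∉ w`, the arc `w` starts after `p`, so it lies between `p` and the right end of `v`. -/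
lemma pts_ssubset_of_angFrom_right_le {v w : CArc} {p : AddCircle (1:ℝ)} (hpv : p ∈ v.pts)
    (hpw : p ∉ w.pts) (h : angFrom p w.right ≤ angFrom p v.right) : w.pts ⊂ v.pts := by
  obtain ⟨s, hs0, hsv, rfl⟩ := hpv
  have hv : angFrom (v.left + s) v.right = v.len - s :=
    angFrom_eq_of_coe_eq (by rw [right, AddCircle.coe_sub]; abel)
      ⟨by linarith, by linarith [v.len_lt_one]⟩
  set β := angFrom (v.left + s) w.right
  have hβ0 : 0 ≤ β := (angFrom_mem_Ico _ _).1
  have hwr : w.right = v.left + s + β := by rw [coe_angFrom]; abel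
  have hwl : w.left = v.left + s + β - w.len := by rw [w.left_eq_right_sub, hwr]
  have hβ : w.len < β := by
    by_contra! hβ
    exact hpw ⟨w.len - β, by linarith, by linarith, by
      rw [hwl, AddCircle.coe_sub]; abel⟩
  refine ⟨?_, fun hsub => hpw (hsub ⟨s, hs0, hsv, rfl⟩)⟩
  rintro z ⟨t, ht0, htw, rfl⟩
  exact ⟨s + (β - w.len) + t, by linarith, by linarith, by
    rw [hwl]; push_cast [AddCircle.coe_add, AddCircle.coe_sub]; abel⟩

lemma pts_ssubset_of_left_not_mem_of_right_not_mem {u v : CArc} (huv : (u.pts ∩ v.pts).Nonempty)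
    (hl : u.left ∉ v.pts) (hr : u.right ∉ v.pts) : v.pts ⊂ u.pts := by
  obtain ⟨z, ⟨t, ht0, htu, rfl⟩, ⟨t', ht'0, ht'v, hz⟩⟩ := huv
  have hvl : v.left = u.left + t - t' := by rw [hz]; abel
  have ht't : t' ≤ t := by
    by_contra! h
    exact hl ⟨t' - t, by linarith, by linarith, by
      rw [hvl]; push_cast [AddCircle.coe_add, AddCircle.coe_sub]; abel⟩
  have hlen : v.len - t' ≤ u.len - t := by
    by_contra! h
    exact hr ⟨u.len - (t - t'), by linarith, by linarith, by
      rw [hvl, right]; push_cast [AddCircle.coe_add, AddCircle.coe_sub]; abel⟩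
  refine ⟨?_, fun hsub => hr (hsub u.right_mem)⟩
  rintro z' ⟨s, hs0, hsv, rfl⟩
  exact ⟨t - t' + s, by linarith, by linarith, by
    rw [hvl]; push_cast [AddCircle.coe_add, AddCircle.coe_sub]; abel⟩

end CArc

namespace ArcFamily

lemma IsProper.left_mem_or_right_mem {F : ArcFamily} (hF : F.IsProper) {u v : CArc}
    (hu : u ∈ F.arcs) (hv : v ∈ F.arcs) (huv : (u.pts ∩ v.pts).Nonempty) :
    u.left ∈ v.pts ∨ u.right ∈ v.pts := by
  by_contra! h
  exact hF v hv u hu (CArc.pts_ssubset_of_left_not_mem_of_right_not_mem huv h.1 h.2)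

/-- The neighbours of `u` lie in `(O(l(u)) ∪ O(r(u))) \ {u}`. -/
lemma IsProper.ncard_neighborSet_add_two_le {F : ArcFamily} (hF : F.IsProper)
    (u : {a : CArc // a ∈ F.arcs}) :
    (F.graph.neighborSet u).ncard + 2 ≤
      (F.overlap u.1.left).card + (F.overlap u.1.right).card := by
  have hl : u.1 ∈ F.overlap u.1.left := Finset.mem_filter.mpr ⟨u.2, u.1.left_mem⟩
  have hr : u.1 ∈ F.overlap u.1.right := Finset.mem_filter.mpr ⟨u.2, u.1.right_mem⟩
  have hsub : Set.MapsTo Subtype.val (F.graph.neighborSet u)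
      ↑((F.overlap u.1.left).erase u.1 ∪ (F.overlap u.1.right).erase u.1) := by
    rintro v ⟨huv, hint⟩
    have hne : v.1 ≠ u.1 := fun h => huv (Subtype.ext h.symm)
    rcases hF.left_mem_or_right_mem u.2 v.2 hint with h | h
    · exact Finset.mem_union_left _ (Finset.mem_erase.mpr ⟨hne, Finset.mem_filter.mpr ⟨v.2, h⟩⟩)
    · exact Finset.mem_union_right _ (Finset.mem_erase.mpr ⟨hne, Finset.mem_filter.mpr ⟨v.2, h⟩⟩)
  have := Set.ncard_le_ncard_of_injOn Subtype.val hsub Subtype.val_injective.injOn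
  rw [Set.ncard_coe_finset] at this
  have := Finset.card_union_le ((F.overlap u.1.left).erase u.1) ((F.overlap u.1.right).erase u.1)
  rw [Finset.card_erase_of_mem hl, Finset.card_erase_of_mem hr] at this
  have := Finset.card_pos.mpr ⟨_, hl⟩
  have := Finset.card_pos.mpr ⟨_, hr⟩
  omega

noncomputable def erase (F : ArcFamily) (u : CArc) : ArcFamily where
  arcs := F.arcs.erase u
  endpoints_distinct a ha b hb :=
    F.endpoints_distinct a (Finset.mem_of_mem_erase ha) b (Finset.mem_of_mem_erase hb)

lemma IsProper.erase {F : ArcFamily} (hF : F.IsProper) (u : CArc) : (F.erase u).IsProper :=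
  fun a ha b hb => hF a (Finset.mem_of_mem_erase ha) b (Finset.mem_of_mem_erase hb)

def graphEmbeddingOfSubset {F F' : ArcFamily} (h : F'.arcs ⊆ F.arcs) : F'.graph ↪g F.graph where
  toFun b := ⟨b.1, h b.2⟩
  inj' _ _ h := Subtype.ext (Subtype.mk.inj h)
  map_rel_iff' := and_congr_left' (not_congr (Subtype.mk_eq_mk.trans Subtype.ext_iff.symm))

def induceComplHomGraphErase (F : ArcFamily) (u : {a : CArc // a ∈ F.arcs}) :
    F.graph.induce {u}ᶜ →g (F.erase u.1).graph where
  toFun v := ⟨v.1.1, Finset.mem_erase.mpr ⟨fun h => v.2 (Subtype.ext h), v.1.2⟩⟩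
  map_rel' h := ⟨fun hvw => h.1 (Subtype.ext (Subtype.mk.inj hvw)), h.2⟩

end ArcFamily

lemma HasKMinor.mono {V : Type*} {G : SimpleGraph V} {m m' : ℕ} (h : HasKMinor G m)
    (hm : m' ≤ m) : HasKMinor G m' := by
  obtain ⟨B, hconn, hdisj, hadj⟩ := h
  exact ⟨fun i => B (Fin.castLE hm i), fun i => hconn _,
    fun i j hij => hdisj ((Fin.castLE_injective hm).ne hij),
    fun i j hij => hadj ((Fin.castLE_injective hm).ne hij)⟩

lemma HasKMinor.map {V W : Type*} {G : SimpleGraph V} {H : SimpleGraph W} (f : G ↪g H) {m : ℕ}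
    (h : HasKMinor G m) : HasKMinor H m := by
  obtain ⟨B, hconn, hdisj, hadj⟩ := h
  refine ⟨fun i => f '' B i, fun i => ?_, fun i j hij => ?_, fun i j hij => ?_⟩
  · refine (hconn i).map (induceHom f.toHom (Set.mapsTo_image f (B i))) ?_
    rintro ⟨_, v, hv, rfl⟩
    exact ⟨⟨v, hv⟩, rfl⟩
  · exact (Set.disjoint_image_iff f.injective).mpr (hdisj hij)
  · obtain ⟨u, hu, v, hv, huv⟩ := hadj hij
    exact ⟨f u, Set.mem_image_of_mem f hu, f v, Set.mem_image_of_mem f hv, f.map_adj_iff.mpr huv⟩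

lemma SimpleGraph.Colorable.of_induce_compl_singleton {V : Type*} [Finite V]
    {G : SimpleGraph V} {u : V} {n : ℕ} (h : (G.induce {u}ᶜ).Colorable n)
    (hdeg : (G.neighborSet u).ncard < n) : G.Colorable n := by
  obtain ⟨c⟩ := h
  let c₀ : V → Fin n := fun v => if hv : v = u then ⟨0, by omega⟩ else c ⟨v, hv⟩
  obtain ⟨col, -, hcol⟩ : ∃ col ∈ Set.univ, col ∉ c₀ '' G.neighborSet u := by
    refine Set.exists_mem_notMem_of_ncard_lt_ncard ?_
    rw [Set.ncard_univ, Nat.card_eq_fintype_card, Fintype.card_fin]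
    exact (Set.ncard_image_le (Set.toFinite _)).trans_lt hdeg
  refine ⟨Coloring.mk (fun v => if v = u then col else c₀ v) fun {v w} hvw => ?_⟩
  by_cases hv : v = u <;> by_cases hw : w = u
  · exact absurd (hv.trans hw.symm) hvw.ne
  · subst hv
    simpa [hw] using fun h => hcol ⟨w, hvw, h.symm⟩
  · subst hw
    simpa [hv] using fun h => hcol ⟨v, hvw.symm, h⟩
  · simpa [hv, hw, c₀] using c.valid (v := ⟨v, hv⟩) (w := ⟨w, hw⟩) hvw

namespace MinCounterexample

/-- By minimality `𝒢 - u` has a complete minor on its chromatic number of vertices; this minor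
lives in `𝒢`, so that number is less than `χ(𝒢)`. -/
lemma colorable_erase (C : MinCounterexample) {u : CArc} (hu : u ∈ C.F.arcs) {m : ℕ}
    (hχ : C.F.graph.chromaticNumber = m) : (C.F.erase u).graph.Colorable (m - 1) := by
  obtain ⟨m', hm'⟩ := ENat.ne_top_iff_exists.mp
    (chromaticNumber_ne_top_iff_exists.mpr ⟨_, (C.F.erase u).graph.colorable_of_fintype⟩)
  have hcard : Fintype.card {a : CArc // a ∈ (C.F.erase u).arcs} < C.F.arcs.card := by
    rw [Fintype.card_coe]
    exact Finset.card_erase_lt_of_mem hu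
  have hminor := C.minimal _ (C.F.erase u).graph ⟨_, C.proper.erase u, ⟨Iso.refl⟩⟩ hcard m' hm'.symm
  have hm'm : m' < m := by
    by_contra! h
    exact C.no_clique_minor m hχ
      ((hminor.mono h).map (ArcFamily.graphEmbeddingOfSubset (Finset.erase_subset u _)))
  rw [← chromaticNumber_le_iff_colorable, ← hm']
  exact_mod_cast (by omega : m' ≤ m - 1)

lemma sub_one_le_ncard_neighborSet (C : MinCounterexample) (u : {a : CArc // a ∈ C.F.arcs})
    {m : ℕ} (hχ : C.F.graph.chromaticNumber = m) : m - 1 ≤ (C.F.graph.neighborSet u).ncard := by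
  by_contra! h
  have hcol : C.F.graph.Colorable (m - 1) :=
    ((C.colorable_erase u.2 hχ).of_hom (C.F.induceComplHomGraphErase u)).of_induce_compl_singleton h
  have hle := hcol.chromaticNumber_le
  rw [hχ, Nat.cast_le] at hle
  omega

end MinCounterexample

namespace LabeledMinCounterexample

variable (C : LabeledMinCounterexample)

lemma card_overlap_le (p : AddCircle (1:ℝ)) : (C.F.overlap p).card ≤ C.r := by
  rw [C.hmax]
  exact le_csSup ⟨C.F.arcs.card, by rintro _ ⟨p', rfl⟩; exact Finset.card_filter_le _ _⟩ ⟨p, rfl⟩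

/-- Counting neighbours: `r + x - 1 ≤ deg u ≤ |O(l(u))| + |O(r(u))| - 2 ≤ r + |O(r(u))| - 2`. -/
lemma x_lt_card_overlap_right {u : CArc} (hu : u ∈ C.F.arcs) :
    C.x < (C.F.overlap u.right).card := by
  have hdeg := C.sub_one_le_ncard_neighborSet ⟨u, hu⟩ C.hx
  have hends := C.proper.ncard_neighborSet_add_two_le ⟨u, hu⟩
  dsimp only at hends
  have hleft := C.card_overlap_le u.left
  omega

lemma exists_q_eq {b : CArc} (hb : b ∈ C.F.overlap C.p₀) : ∃ i, 1 ≤ i ∧ i ≤ C.r ∧ b = C.q i := by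
  obtain ⟨i, hi, rfl⟩ := Finset.surj_on_of_inj_on_of_card_le (s := Finset.Icc 1 C.r)
    (fun i _ => C.q i) (fun i hi => C.q_mem i (Finset.mem_Icc.mp hi).1 (Finset.mem_Icc.mp hi).2)
    (fun i i' hi hi' => C.q_inj i i' (Finset.mem_Icc.mp hi).1 (Finset.mem_Icc.mp hi).2
      (Finset.mem_Icc.mp hi').1 (Finset.mem_Icc.mp hi').2)
    (by rw [Nat.card_Icc, C.hr]; omega) b hb
  exact ⟨i, (Finset.mem_Icc.mp hi).1, (Finset.mem_Icc.mp hi).2, rfl⟩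

lemma exists_a_eq {b : CArc} (hb : b ∈ C.F.arcs) (hbp : b ∉ C.F.overlap C.p₀) :
    ∃ m, 1 ≤ m ∧ m ≤ C.k ∧ b = C.a m := by
  have hcard : (C.F.arcs \ C.F.overlap C.p₀).card = C.k := by
    have hsub : C.F.overlap C.p₀ ⊆ C.F.arcs := Finset.filter_subset _ _
    rw [Finset.card_sdiff_of_subset hsub, C.hr, C.hk]
    omega
  obtain ⟨m, hm, rfl⟩ := Finset.surj_on_of_inj_on_of_card_le (s := Finset.Icc 1 C.k)
    (fun m _ => C.a m)
    (fun m hm => Finset.mem_sdiff.mpr (C.a_mem m (Finset.mem_Icc.mp hm).1 (Finset.mem_Icc.mp hm).2))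
    (fun m m' hm hm' => C.a_inj m m' (Finset.mem_Icc.mp hm).1 (Finset.mem_Icc.mp hm).2
      (Finset.mem_Icc.mp hm').1 (Finset.mem_Icc.mp hm').2)
    (by rw [Nat.card_Icc, hcard]; omega) b (Finset.mem_sdiff.mpr ⟨hb, hbp⟩)
  exact ⟨m, (Finset.mem_Icc.mp hm).1, (Finset.mem_Icc.mp hm).2, rfl⟩

lemma angFrom_right_a_le {i l : ℕ} (hi : 1 ≤ i) (hil : i ≤ l) (hl : l ≤ C.k) {v : CArc}
    (hv : v ∈ C.F.arcs) (hva : ∀ m, i ≤ m → m ≤ l → v ≠ C.a m) :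
    angFrom (C.a i).right (C.a l).right ≤ angFrom (C.a i).right v.right := by
  refine angFrom_le_angFrom_of_cyclic (p₀ := C.p₀) ?_ ?_
  · rcases hil.lt_or_eq with h | rfl
    · exact (C.a_order i l hi h hl).le
    · exact le_rfl
  by_cases hvp : v ∈ C.F.overlap C.p₀
  · obtain ⟨ℓ, hℓ, hℓr, rfl⟩ := C.exists_q_eq hvp
    exact Or.inl (C.qa_order ℓ i hℓ hℓr hi (hil.trans hl))
  obtain ⟨m, hm, hmk, rfl⟩ := C.exists_a_eq hv hvp
  rcases lt_or_ge m i with hmi | hmi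
  · exact Or.inl (C.a_order m i hm hmi (hil.trans hl))
  · have hlm : l < m := by
      by_contra! h
      exact hva m hmi h rfl
    exact Or.inr (C.a_order l m (hi.trans hil) hlm hmk).le

end LabeledMinCounterexample

/-- In the labeled minimum counterexample, for all `1 ≤ j ≤ x` and
`1 ≤ i ≤ k − x`, the arc `a (i+j)` is clockwise adjacent to the arc `a i`. -/
theorem a_succ_cw_adjacent (C : LabeledMinCounterexample) :
    ∀ i j, 1 ≤ j → j ≤ C.x → 1 ≤ i → i ≤ C.k - C.x →
      C.F.CwAdj (C.a i) (C.a (i + j)) := by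
  intro i j hj hjx hi hik
  have hai := C.a_mem i hi (by omega)
  have haij := C.a_mem (i + j) (by omega) (by omega)
  refine ⟨fun h => by have := C.a_inj _ _ (by omega) (by omega) hi (by omega) h; omega, ?_⟩
  by_contra hnot
  obtain ⟨v, hv, hva⟩ : ∃ v ∈ C.F.overlap (C.a i).right, v ∉ (Finset.Ico i (i + j)).image C.a := by
    refine Finset.not_subset.mp fun hsub => ?_
    have hsmall := (Finset.card_le_card hsub).trans Finset.card_image_le
    rw [Nat.card_Ico] at hsmall
    have := C.x_lt_card_overlap_right hai.1
    omega
  obtain ⟨hvarc, hpv⟩ := Finset.mem_filter.mp hv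
  have hva' : ∀ m, i ≤ m → m ≤ i + j → v ≠ C.a m := by
    rintro m him hmij rfl
    rcases hmij.lt_or_eq with h | rfl
    · exact hva (Finset.mem_image_of_mem _ (Finset.mem_Ico.mpr ⟨him, h⟩))
    · exact hnot hv
  exact C.proper _ haij.1 v hvarc <| CArc.pts_ssubset_of_angFrom_right_le hpv
    (fun h => hnot (Finset.mem_filter.mpr ⟨haij.1, h⟩))
    (C.angFrom_right_a_le hi (by omega) (by omega) hvarc hva')
end
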